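/- For α ∈ (0,1) one has θ_2 ≠ 0 and θ_3/θ_2 − δ_3 = (1/(3(1+α)))·(4α⁴ − 4α³ + 17α² + 7)/(2α² − α + 5) > 0; in particular θ_3/θ_2 ≥ δ_3. -/

import Mathlib

/-- The sequence `θ_m`. -/
noncomputable def seqTheta (α : ℝ) : ℕ → ℝ
  | 0 => ((α + 1) / (2 * α)) ^ α
  | 1 => (α - 1) * (2 * α + 1) / (α + 1) * seqTheta α 0
  | (m + 2) =>
      2 * α / (((m : ℝ) + 2) * (1 + α)) *
        (((((m : ℝ) + 2) - 1) / α - (1 - α) / (2 * α) * (2 * α + 1)) * seqTheta α (m + 1) +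
          (1 - α) / (2 * α) * (3 - ((m : ℝ) + 2)) * seqTheta α m)

/-- `δ_m` from the paper. -/
noncomputable def deltaT (α : ℝ) (m : ℕ) : ℝ :=
  (1 - α) / (2 * α) * ((m : ℝ) - 2) /
      ((m : ℝ) / α - (1 - α) / (2 * α) * (2 * α + 1)) * (2 / (1 + α)) * (1 + 1 / (m : ℝ))

/-!
Unrolling the recursion twice expresses `θ_2` and `θ_3` as explicit rational functions of `α`
times `θ_0 > 0`, so `θ_3 / θ_2 = (2α³ + α² + 2α + 3) / (3(1 + α)²)`, while
`δ_3 = 8(1 - α) / (3(1 + α)(2α² - α + 5))`. Their difference is the stated rational function,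
whose numerator `4α⁴ - 4α³ + 17α² + 7 = (2α² - α)² + 16α² + 7` and denominator
`2α² - α + 5` are positive for every real `α`.
-/

namespace seqTheta

variable {α : ℝ}

theorem zero_pos (hα : 0 < α) : 0 < seqTheta α 0 :=
  Real.rpow_pos_of_pos (by positivity) α

theorem one_eq : seqTheta α 1 = (α - 1) * (2 * α + 1) / (α + 1) * seqTheta α 0 := rfl

theorem two_eq (hα : α ≠ 0) (hα' : 1 + α ≠ 0) :
    seqTheta α 2 = 2 * α ^ 3 * (α - 1) / (1 + α) ^ 2 * seqTheta α 0 := by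
  have hα'' : α + 1 ≠ 0 := by rwa [add_comm]
  rw [eq_3 α 0, one_eq]
  push_cast
  field_simp
  ring

theorem three_eq (hα : α ≠ 0) (hα' : 1 + α ≠ 0) :
    seqTheta α 3 =
      2 * α ^ 3 * (α - 1) * (2 * α ^ 3 + α ^ 2 + 2 * α + 3) / (3 * (1 + α) ^ 4) *
        seqTheta α 0 := by
  have hα'' : α + 1 ≠ 0 := by rwa [add_comm]
  rw [eq_3 α 1, two_eq hα hα', one_eq]
  push_cast
  field_simp
  ring

theorem two_ne_zero (hα₀ : 0 < α) (hα₁ : α ≠ 1) : seqTheta α 2 ≠ 0 := by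
  rw [two_eq hα₀.ne' (by positivity)]
  have : α - 1 ≠ 0 := sub_ne_zero.mpr hα₁
  have : 0 < seqTheta α 0 := zero_pos hα₀
  positivity

theorem three_div_two (hα₀ : 0 < α) (hα₁ : α ≠ 1) :
    seqTheta α 3 / seqTheta α 2 = (2 * α ^ 3 + α ^ 2 + 2 * α + 3) / (3 * (1 + α) ^ 2) := by
  have : α - 1 ≠ 0 := sub_ne_zero.mpr hα₁
  have h1α : 1 + α ≠ 0 := by positivity
  rw [two_eq hα₀.ne' h1α, three_eq hα₀.ne' h1α, mul_div_mul_right _ _ (zero_pos hα₀).ne']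
  field_simp

end seqTheta

theorem two_mul_sq_sub_add_five_pos (α : ℝ) : 0 < 2 * α ^ 2 - α + 5 := by
  nlinarith [sq_nonneg (α - 1 / 4)]

theorem four_mul_pow_four_sub_add_pos (α : ℝ) : 0 < 4 * α ^ 4 - 4 * α ^ 3 + 17 * α ^ 2 + 7 := by
  nlinarith [sq_nonneg (2 * α ^ 2 - α), sq_nonneg α]

theorem deltaT_three {α : ℝ} (hα : α ≠ 0) (hα' : 1 + α ≠ 0) :
    deltaT α 3 = 8 * (1 - α) / (3 * (1 + α) * (2 * α ^ 2 - α + 5)) := by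
  have := (two_mul_sq_sub_add_five_pos α).ne'
  have hc : 3 / α - (1 - α) / (2 * α) * (2 * α + 1) = (2 * α ^ 2 - α + 5) / (2 * α) := by
    field_simp
    ring
  unfold deltaT
  push_cast
  rw [hc]
  field_simp
  ring

theorem seqTheta_three_div_two_sub_deltaT_three {α : ℝ} (hα₀ : 0 < α) (hα₁ : α ≠ 1) :
    seqTheta α 3 / seqTheta α 2 - deltaT α 3 =
      1 / (3 * (1 + α)) * (4 * α ^ 4 - 4 * α ^ 3 + 17 * α ^ 2 + 7) / (2 * α ^ 2 - α + 5) := by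
  have := two_mul_sq_sub_add_five_pos α
  rw [seqTheta.three_div_two hα₀ hα₁, deltaT_three hα₀.ne' (by positivity),
    div_sub_div _ _ (by positivity) (by positivity), div_mul_eq_mul_div, div_div,
    div_eq_div_iff (by positivity) (by positivity)]
  ring

theorem seqTheta_three_two (α : ℝ) (hα : α ∈ Set.Ioo (0 : ℝ) 1) :
    seqTheta α 2 ≠ 0 ∧
    seqTheta α 3 / seqTheta α 2 - deltaT α 3 =
      1 / (3 * (1 + α)) * (4 * α ^ 4 - 4 * α ^ 3 + 17 * α ^ 2 + 7) / (2 * α ^ 2 - α + 5) ∧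
    0 < 1 / (3 * (1 + α)) * (4 * α ^ 4 - 4 * α ^ 3 + 17 * α ^ 2 + 7) / (2 * α ^ 2 - α + 5) ∧
    deltaT α 3 ≤ seqTheta α 3 / seqTheta α 2 := by
  obtain ⟨hα₀, hα₁⟩ := hα
  have key := seqTheta_three_div_two_sub_deltaT_three hα₀ hα₁.ne
  have hpos : 0 < 1 / (3 * (1 + α)) * (4 * α ^ 4 - 4 * α ^ 3 + 17 * α ^ 2 + 7) /
      (2 * α ^ 2 - α + 5) := by
    have := two_mul_sq_sub_add_five_pos α
    have := four_mul_pow_four_sub_add_pos α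
    positivity
  exact ⟨seqTheta.two_ne_zero hα₀ hα₁.ne, key, hpos, by linarith⟩
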